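/- arXiv:1911.03771 — 2 statements merged into one kernel-verified Lean document; each statement's English description precedes it below -/
import Mathlib

section
/- Let λ ∈ (0,1), Q_XX ∈ ℝ^{m×m} invertible, Q_ZZ ∈ ℝ^{ℓ×ℓ} invertible, Q_XZ ∈ ℝ^{m×ℓ}, Q_ZX = Q_XZᵀ, and suppose the (2m)×(2m) matrix Q_{X̃·Z} = diag(λ Q_XX, (1−λ) Q_XX) − [λ Q_XZ; (1−λ) Q_XZ] Q_ZZ⁻¹ [λ Q_ZX, (1−λ) Q_ZX] is invertible and that Q_{Z·X} := Q_ZZ − Q_ZX Q_XX⁻¹ Q_XZ is invertible. Then Q_{X̃·Z}⁻¹ = diag(λ⁻¹ Q_XX⁻¹, (1−λ)⁻¹ Q_XX⁻¹) + [[𝕄, 𝕄],[𝕄, 𝕄]] where 𝕄 = Q_XX⁻¹ Q_XZ Q_{Z·X}⁻¹ Q_ZX Q_XX⁻¹. -/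
open Matrix

/-- block inverse of Q_{X̃·Z}. -/
theorem block_schur_inverse {m l : ℕ} (lam : ℝ) (hlam0 : 0 < lam) (hlam1 : lam < 1)
    (Qxx : Matrix (Fin m) (Fin m) ℝ) (Qzz : Matrix (Fin l) (Fin l) ℝ)
    (Qxz : Matrix (Fin m) (Fin l) ℝ)
    (hxx : IsUnit Qxx.det) (hzz : IsUnit Qzz.det)
    (hschur : IsUnit (Qzz - Qxzᵀ * Qxx⁻¹ * Qxz).det)
    (hbig : IsUnit
      (Matrix.fromBlocks (lam • Qxx) 0 0 ((1 - lam) • Qxx)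
          - Matrix.fromRows (lam • Qxz) ((1 - lam) • Qxz) * Qzz⁻¹ *
              Matrix.fromCols (lam • Qxzᵀ) ((1 - lam) • Qxzᵀ)).det) :
    (Matrix.fromBlocks (lam • Qxx) 0 0 ((1 - lam) • Qxx)
        - Matrix.fromRows (lam • Qxz) ((1 - lam) • Qxz) * Qzz⁻¹ *
            Matrix.fromCols (lam • Qxzᵀ) ((1 - lam) • Qxzᵀ))⁻¹ =
      Matrix.fromBlocks (lam⁻¹ • Qxx⁻¹) 0 0 ((1 - lam)⁻¹ • Qxx⁻¹)
        + Matrix.fromBlocks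
            (Qxx⁻¹ * Qxz * (Qzz - Qxzᵀ * Qxx⁻¹ * Qxz)⁻¹ * Qxzᵀ * Qxx⁻¹)
            (Qxx⁻¹ * Qxz * (Qzz - Qxzᵀ * Qxx⁻¹ * Qxz)⁻¹ * Qxzᵀ * Qxx⁻¹)
            (Qxx⁻¹ * Qxz * (Qzz - Qxzᵀ * Qxx⁻¹ * Qxz)⁻¹ * Qxzᵀ * Qxx⁻¹)
            (Qxx⁻¹ * Qxz * (Qzz - Qxzᵀ * Qxx⁻¹ * Qxz)⁻¹ * Qxzᵀ * Qxx⁻¹) := by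
  have hlam0' : lam ≠ 0 := ne_of_gt hlam0
  have hmu0' : (1 : ℝ) - lam ≠ 0 := by linarith
  apply inv_eq_right_inv
  set S := Qzz - Qxzᵀ * Qxx⁻¹ * Qxz with hSdef
  set E := Qxx⁻¹ * Qxz * S⁻¹ * Qxzᵀ * Qxx⁻¹ with hEdef
  have h1 : Qxx * Qxx⁻¹ = 1 := mul_nonsing_inv Qxx hxx
  have hz : Qzz⁻¹ * Qzz = 1 := nonsing_inv_mul Qzz hzz
  have hs : S * S⁻¹ = 1 := mul_nonsing_inv S hschur
  have hZS : Qzz = S + Qxzᵀ * Qxx⁻¹ * Qxz := by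
    rw [hSdef, sub_add_cancel]
  have hAE : Qxx * E = Qxz * (S⁻¹ * (Qxzᵀ * Qxx⁻¹)) := by
    rw [hEdef]
    simp only [← Matrix.mul_assoc]
    rw [h1, Matrix.one_mul]
  have h2 : Qxzᵀ * Qxx⁻¹ + Qxzᵀ * E = Qzz * (S⁻¹ * (Qxzᵀ * Qxx⁻¹)) := by
    rw [hEdef, hZS, Matrix.add_mul, ← Matrix.mul_assoc S, hs, Matrix.one_mul]
    simp only [Matrix.mul_assoc]
  have key : Qxx * E = Qxz * (Qzz⁻¹ * (Qxzᵀ * Qxx⁻¹))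
      + Qxz * (Qzz⁻¹ * (Qxzᵀ * E)) := by
    calc Qxx * E = Qxz * (S⁻¹ * (Qxzᵀ * Qxx⁻¹)) := hAE
      _ = Qxz * (Qzz⁻¹ * (Qzz * (S⁻¹ * (Qxzᵀ * Qxx⁻¹)))) := by
          rw [← Matrix.mul_assoc Qzz⁻¹, hz, Matrix.one_mul]
      _ = Qxz * (Qzz⁻¹ * (Qxzᵀ * Qxx⁻¹ + Qxzᵀ * E)) := by rw [h2]
      _ = _ := by rw [Matrix.mul_add, Matrix.mul_add]
  rw [fromRows_mul, fromRows_mul_fromCols]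
  rw [show ∀ (A A' B B' C C' D D' : Matrix (Fin m) (Fin m) ℝ),
      fromBlocks A B C D - fromBlocks A' B' C' D' =
        fromBlocks (A - A') (B - B') (C - C') (D - D') from by
    intros; ext (i|i) (j|j) <;> rfl]
  rw [fromBlocks_add, fromBlocks_multiply, ← fromBlocks_one]
  rw [fromBlocks_inj]
  refine ⟨?_, ?_, ?_, ?_⟩ <;>
    · simp only [Matrix.smul_mul, Matrix.mul_smul, smul_mul_assoc, mul_smul_comm, smul_smul,
        smul_sub, smul_add, add_mul, mul_add, sub_mul, mul_sub,
        Matrix.zero_mul, zero_sub, neg_mul, Matrix.mul_zero, Matrix.mul_assoc]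
      rw [key]
      try rw [h1]
      match_scalars <;> first
        | (field_simp; try ring)
        | ring
end

section
/- Let λ ∈ (0,1) and let φ₁, φ₂ : [0,1] → ℝ be continuous. Define C_T as the T×T matrix with entries C_T(i,j;λ) as above, and the vectors 𝛗_k = (φ_k(1/T), …, φ_k(T/T))ᵀ for k = 1,2. Then as T → ∞, (1/T²) 𝛗₁ᵀ C_T 𝛗₂ converges to (1/λ²)∫₀^λ φ₁φ₂ − (1/λ³)(∫₀^λ φ₁)(∫₀^λ φ₂) + (1/(1−λ)²)∫_λ^1 φ₁φ₂ − (1/(1−λ)³)(∫_λ^1 φ₁)(∫_λ^1 φ₂), which equals ∫₀¹ φ̃₁(r;λ) φ̃₂(r;λ) dr for the demeaned-rescaled transforms φ̃_k. -/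
/-!
On each side of `λ` the block of `C_T` is a multiple of `T • 1 - c • J` (`J` the all-ones matrix),
so `T⁻² 𝛗₁ᵀ C_T 𝛗₂` is exactly a combination of the Riemann sums `T⁻¹ ∑ f (i / T)` of `φ₁ φ₂`, `φ₁`,
`φ₂` over the grid points `i / T ≤ λ` and over those `> λ`. By uniform continuity these converge to
the integrals over `[0, λ]` and `[λ, 1]`. On each piece `φ̃_k` is the rescaled deviation of `φ_k`
from its mean, and `∫ (f - f̄) (g - ḡ) = ∫ f g - |I| f̄ ḡ` gives the closed form.
-/

open Matrix MeasureTheory Filter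

/-- The T×T matrix C_T(·,·;λ) from the paper, with time points i/T for
i = 1, …, T (index `i : Fin T` corresponds to time (i+1)/T). -/
noncomputable def CTmatrix (T : ℕ) (lam : ℝ) : Matrix (Fin T) (Fin T) ℝ :=
  Matrix.of fun i j =>
    (if ((i : ℕ) + 1 : ℝ) / T ≤ lam ∧ ((j : ℕ) + 1 : ℝ) / T ≤ lam then
        ((if i = j then (T : ℝ) else 0) - 1 / lam) / lam ^ 2
      else 0)
    + (if lam < ((i : ℕ) + 1 : ℝ) / T ∧ lam < ((j : ℕ) + 1 : ℝ) / T then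
        ((if i = j then (T : ℝ) else 0) - 1 / (1 - lam)) / (1 - lam) ^ 2
      else 0)

open Finset Set

theorem abs_mul_sub_integral_le {f : ℝ → ℝ} {u v ε : ℝ} (huv : u ≤ v)
    (hf : IntervalIntegrable f volume u v) (hε : ∀ r ∈ Icc u v, |f v - f r| ≤ ε) :
    |(v - u) * f v - ∫ r in u..v, f r| ≤ (v - u) * ε := by
  have hconst : (v - u) * f v = ∫ _ in u..v, f v := by simp
  rw [hconst, ← intervalIntegral.integral_sub intervalIntegrable_const hf, ← Real.norm_eq_abs,
    mul_comm, ← abs_of_nonneg (sub_nonneg.2 huv)]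
  refine intervalIntegral.norm_integral_le_of_norm_le_const fun r hr => hε r ?_
  rw [uIoc_of_le huv] at hr
  exact Ioc_subset_Icc_self hr

theorem abs_mul_sum_sub_integral_le {f : ℝ → ℝ} {h ε : ℝ} (hh : 0 ≤ h) (N : ℕ)
    (hf : ContinuousOn f (Icc 0 (N * h)))
    (hε : ∀ x ∈ Icc 0 (N * h), ∀ y ∈ Icc 0 (N * h), |x - y| ≤ h → |f x - f y| ≤ ε) :
    |h * ∑ k ∈ range N, f ((k + 1) * h) - ∫ r in (0 : ℝ)..N * h, f r| ≤ N * h * ε := by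
  induction N with
  | zero => simp
  | succ N ih =>
    push_cast at hf hε ⊢
    have hsub : Icc 0 (N * h) ⊆ Icc 0 ((N + 1) * h) := Icc_subset_Icc_right (by nlinarith)
    have hNh : (0 : ℝ) ≤ N * h := by positivity
    have hint : ∀ a ∈ Icc 0 ((N + 1 : ℝ) * h), ∀ b ∈ Icc 0 ((N + 1 : ℝ) * h),
        IntervalIntegrable f volume a b := fun a ha b hb =>
      (hf.mono (uIcc_subset_Icc ha hb)).intervalIntegrable
    have hlast : |h * f ((N + 1) * h) - ∫ r in N * h..(N + 1) * h, f r| ≤ h * ε := by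
      have := abs_mul_sub_integral_le (u := N * h) (v := (N + 1) * h) (ε := ε) (by nlinarith)
        (hint _ ⟨hNh, by nlinarith⟩ _ ⟨by positivity, le_rfl⟩) fun r hr =>
          hε _ ⟨by positivity, le_rfl⟩ r ⟨hNh.trans hr.1, hr.2⟩
            (by rw [abs_of_nonneg (by linarith [hr.2])]; linarith [hr.1])
      simpa [add_mul, add_sub_cancel_left] using this
    have hsplit : ∫ r in (0 : ℝ)..(N + 1) * h, f r
        = (∫ r in (0 : ℝ)..N * h, f r) + ∫ r in N * h..(N + 1) * h, f r :=
      (intervalIntegral.integral_add_adjacent_intervals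
        (hint _ ⟨le_rfl, by positivity⟩ _ ⟨hNh, by nlinarith⟩)
        (hint _ ⟨hNh, by nlinarith⟩ _ ⟨by positivity, le_rfl⟩)).symm
    calc |h * ∑ k ∈ range (N + 1), f ((k + 1) * h) - ∫ r in (0 : ℝ)..(N + 1) * h, f r|
        = |(h * ∑ k ∈ range N, f ((k + 1) * h) - ∫ r in (0 : ℝ)..N * h, f r)
            + (h * f ((N + 1) * h) - ∫ r in N * h..(N + 1) * h, f r)| := by
          rw [sum_range_succ, hsplit]
          congr 1
          ring
      _ ≤ N * h * ε + h * ε := (abs_add_le _ _).trans (add_le_add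
          (ih (hf.mono hsub) fun x hx y hy => hε x (hsub hx) y (hsub hy)) hlast)
      _ = (N + 1) * h * ε := by ring

theorem tendsto_inv_mul_sum_range_floor {f : ℝ → ℝ} {μ : ℝ} (hμ : 0 ≤ μ)
    (hf : ContinuousOn f (Icc 0 μ)) :
    Tendsto (fun T : ℕ => (T : ℝ)⁻¹ * ∑ k ∈ range ⌊μ * T⌋₊, f ((k + 1) / T)) atTop
      (nhds (∫ r in (0 : ℝ)..μ, f r)) := by
  have hgrid : Tendsto (fun T : ℕ => (⌊μ * T⌋₊ : ℝ) / T) atTop (nhds μ) :=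
    (tendsto_nat_floor_mul_div_atTop hμ).comp tendsto_natCast_atTop_atTop
  have hgrid_mem : ∀ T : ℕ, (⌊μ * T⌋₊ : ℝ) / T ∈ Icc 0 μ := fun T =>
    ⟨by positivity, div_le_of_le_mul₀ T.cast_nonneg hμ (Nat.floor_le (by positivity))⟩
  have hprimitive : Tendsto (fun T : ℕ => ∫ r in (0 : ℝ)..(⌊μ * T⌋₊ : ℝ) / T, f r) atTop
      (nhds (∫ r in (0 : ℝ)..μ, f r)) := by
    have hcont := intervalIntegral.continuousOn_primitive_interval (a := 0) (b := μ)
      (μ := volume) (by rw [uIcc_of_le hμ]; exact hf.integrableOn_Icc)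
    rw [uIcc_of_le hμ] at hcont
    exact (hcont μ ⟨hμ, le_rfl⟩).tendsto.comp
      (tendsto_nhdsWithin_iff.2 ⟨hgrid, Eventually.of_forall hgrid_mem⟩)
  suffices herr : Tendsto (fun T : ℕ => (T : ℝ)⁻¹ * ∑ k ∈ range ⌊μ * T⌋₊, f ((k + 1) / T)
      - ∫ r in (0 : ℝ)..(⌊μ * T⌋₊ : ℝ) / T, f r) atTop (nhds 0) by
    simpa using herr.add hprimitive
  rw [Metric.tendsto_atTop]
  intro ε hε
  obtain ⟨δ, hδ, hfδ⟩ := Metric.uniformContinuousOn_iff.1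
    (isCompact_Icc.uniformContinuousOn_of_continuous hf) (ε / (μ + 1)) (by positivity)
  obtain ⟨T₀, hT₀⟩ := exists_nat_gt δ⁻¹
  refine ⟨T₀, fun T hT => ?_⟩
  have hTpos : (0 : ℝ) < T := (inv_pos.2 hδ).trans (hT₀.trans_le (Nat.cast_le.2 hT))
  have hmesh : (T : ℝ)⁻¹ < δ := inv_lt_of_inv_lt₀ hδ (hT₀.trans_le (Nat.cast_le.2 hT))
  have hsub : Icc 0 (⌊μ * T⌋₊ * (T : ℝ)⁻¹) ⊆ Icc 0 μ := by
    simpa only [← div_eq_mul_inv] using Icc_subset_Icc_right (hgrid_mem T).2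
  have hbound := abs_mul_sum_sub_integral_le (inv_nonneg.2 hTpos.le) ⌊μ * T⌋₊ (hf.mono hsub)
    (ε := ε / (μ + 1)) fun x hx y hy hxy =>
      (hfδ x (hsub hx) y (hsub hy) (hxy.trans_lt hmesh)).le
  rw [Real.dist_eq, sub_zero]
  simp only [div_eq_mul_inv] at hbound ⊢
  calc _ ≤ _ := hbound
    _ ≤ μ * (ε / (μ + 1)) := by
      rw [div_eq_mul_inv ε]; gcongr; simpa only [← div_eq_mul_inv] using (hgrid_mem T).2
    _ < ε := by rw [mul_div_assoc', div_lt_iff₀ (by positivity)]; nlinarith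

noncomputable def gridRiemannSum (T : ℕ) (s : Set ℝ) (f : ℝ → ℝ) : ℝ :=
  (T : ℝ)⁻¹ * ∑ i : Fin T, s.indicator f (((i : ℕ) + 1 : ℝ) / T)

theorem gridRiemannSum_Iic {μ : ℝ} (hμ0 : 0 ≤ μ) (hμ1 : μ ≤ 1) (T : ℕ) (f : ℝ → ℝ) :
    gridRiemannSum T (Iic μ) f = (T : ℝ)⁻¹ * ∑ k ∈ range ⌊μ * T⌋₊, f ((k + 1) / T) := by
  rcases T.eq_zero_or_pos with rfl | hT
  · simp [gridRiemannSum]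
  have hTpos : (0 : ℝ) < T := Nat.cast_pos.2 hT
  have hfloor : ⌊μ * T⌋₊ ≤ T := Nat.floor_le_of_le (by nlinarith)
  have hfilter : (range T).filter (fun k : ℕ => ((k : ℝ) + 1) / T ≤ μ) = range ⌊μ * T⌋₊ := by
    ext k
    have hk : ((k : ℝ) + 1) / T ≤ μ ↔ k < ⌊μ * T⌋₊ := by
      rw [div_le_iff₀ hTpos, ← Nat.add_one_le_iff, Nat.le_floor_iff (by positivity)]
      push_cast; rfl
    rw [mem_filter, Finset.mem_range, Finset.mem_range, hk]
    exact ⟨And.right, fun h => ⟨h.trans_le hfloor, h⟩⟩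
  rw [gridRiemannSum, Fin.sum_univ_eq_sum_range (fun k => (Iic μ).indicator f (((k : ℝ) + 1) / T)),
    ← hfilter, sum_filter]
  simp [Set.indicator_apply]

theorem tendsto_gridRiemannSum_Iic {f : ℝ → ℝ} {μ : ℝ} (hμ0 : 0 ≤ μ) (hμ1 : μ ≤ 1)
    (hf : ContinuousOn f (Icc 0 μ)) :
    Tendsto (fun T => gridRiemannSum T (Iic μ) f) atTop (nhds (∫ r in (0 : ℝ)..μ, f r)) := by
  simpa only [gridRiemannSum_Iic hμ0 hμ1] using tendsto_inv_mul_sum_range_floor hμ0 hf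

theorem gridRiemannSum_Ioi (lam : ℝ) (T : ℕ) (f : ℝ → ℝ) :
    gridRiemannSum T (Ioi lam) f = gridRiemannSum T (Iic 1) f - gridRiemannSum T (Iic lam) f := by
  rw [gridRiemannSum, gridRiemannSum, gridRiemannSum, ← mul_sub, ← sum_sub_distrib]
  congr 1
  refine sum_congr rfl fun i _ => ?_
  have hle : ((i : ℕ) + 1 : ℝ) / T ≤ 1 := div_le_one_of_le₀ (by exact_mod_cast i.2) T.cast_nonneg
  by_cases h : ((i : ℕ) + 1 : ℝ) / T ≤ lam
  · simp [h, hle]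
  · simp [h, hle, lt_of_not_ge h]

theorem tendsto_gridRiemannSum_Ioi {f : ℝ → ℝ} {lam : ℝ} (hlam0 : 0 ≤ lam) (hlam1 : lam ≤ 1)
    (hf : ContinuousOn f (Icc 0 1)) :
    Tendsto (fun T => gridRiemannSum T (Ioi lam) f) atTop (nhds (∫ r in lam..(1 : ℝ), f r)) := by
  have hint : ∀ b ∈ Icc (0 : ℝ) 1, IntervalIntegrable f volume 0 b := fun b hb =>
    (hf.mono (uIcc_subset_Icc ⟨le_rfl, zero_le_one⟩ hb)).intervalIntegrable
  rw [← intervalIntegral.integral_interval_sub_left (hint 1 ⟨zero_le_one, le_rfl⟩)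
    (hint lam ⟨hlam0, hlam1⟩)]
  simpa only [gridRiemannSum_Ioi lam] using
    (tendsto_gridRiemannSum_Iic zero_le_one le_rfl hf).sub
      (tendsto_gridRiemannSum_Iic hlam0 hlam1 (hf.mono (Icc_subset_Icc_right hlam1)))

theorem sum_sum_mul_ite_sub_mul {ι R : Type*} [Fintype ι] [DecidableEq ι] [CommRing R]
    (ψ χ : ι → R) (c d : R) :
    ∑ i, ∑ j, ψ i * ((if i = j then c else 0) - d) * χ j
      = c * ∑ i, ψ i * χ i - d * (∑ i, ψ i) * ∑ j, χ j := by
  simp only [mul_sub, mul_ite, mul_zero, sub_mul, ite_mul, zero_mul, sum_sub_distrib, sum_ite_eq,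
    Finset.mem_univ, ↓reduceIte, ← mul_sum, ← sum_mul, mul_right_comm _ c]
  ring

theorem CTmatrix_quadForm_eq_gridRiemannSum (lam : ℝ) (T : ℕ) (φ₁ φ₂ : ℝ → ℝ) :
    ((T : ℝ) ^ 2)⁻¹ * ∑ i : Fin T, ∑ j : Fin T,
        φ₁ (((i : ℕ) + 1 : ℝ) / T) * CTmatrix T lam i j * φ₂ (((j : ℕ) + 1 : ℝ) / T)
      = 1 / lam ^ 2 * gridRiemannSum T (Iic lam) (fun r => φ₁ r * φ₂ r)
        - 1 / lam ^ 3 * gridRiemannSum T (Iic lam) φ₁ * gridRiemannSum T (Iic lam) φ₂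
        + 1 / (1 - lam) ^ 2 * gridRiemannSum T (Ioi lam) (fun r => φ₁ r * φ₂ r)
        - 1 / (1 - lam) ^ 3 * gridRiemannSum T (Ioi lam) φ₁ * gridRiemannSum T (Ioi lam) φ₂ := by
  rcases T.eq_zero_or_pos with rfl | hT
  · simp [gridRiemannSum]
  have hentry : ∀ i j : Fin T,
      φ₁ (((i : ℕ) + 1 : ℝ) / T) * CTmatrix T lam i j * φ₂ (((j : ℕ) + 1 : ℝ) / T)
        = 1 / lam ^ 2 * ((Iic lam).indicator φ₁ (((i : ℕ) + 1 : ℝ) / T)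
            * ((if i = j then (T : ℝ) else 0) - 1 / lam)
            * (Iic lam).indicator φ₂ (((j : ℕ) + 1 : ℝ) / T))
          + 1 / (1 - lam) ^ 2 * ((Ioi lam).indicator φ₁ (((i : ℕ) + 1 : ℝ) / T)
            * ((if i = j then (T : ℝ) else 0) - 1 / (1 - lam))
            * (Ioi lam).indicator φ₂ (((j : ℕ) + 1 : ℝ) / T)) := by
    intro i j
    by_cases hi : ((i : ℕ) + 1 : ℝ) / T ≤ lam <;> by_cases hj : ((j : ℕ) + 1 : ℝ) / T ≤ lam <;>
      simp [CTmatrix, hi, hj, ← not_le] <;> ring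
  have hscale : ∀ c d A B C : ℝ, ((T : ℝ) ^ 2)⁻¹ * (c * (T * A - d * B * C))
      = c * ((T : ℝ)⁻¹ * A) - c * d * ((T : ℝ)⁻¹ * B) * ((T : ℝ)⁻¹ * C) := by
    intro c d A B C
    field_simp
  -- `ring` expands `(1 - lam) ^ 3` before inverting it, so the cubes are split by hand.
  have hcube : ∀ a : ℝ, 1 / a ^ 3 = 1 / a ^ 2 * (1 / a) := fun a => by ring
  rw [hcube lam, hcube (1 - lam)]
  simp only [hentry, sum_add_distrib, ← mul_sum, sum_sum_mul_ite_sub_mul, mul_add, hscale,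
    gridRiemannSum, Set.indicator_mul]
  ring

theorem intervalIntegral.integral_ite_le {μ : Measure ℝ} [NullSingletonClass μ] {f g : ℝ → ℝ}
    {a b c : ℝ} (hac : a ≤ c) (hcb : c ≤ b) (hf : IntervalIntegrable f μ a c)
    (hg : IntervalIntegrable g μ c b) :
    ∫ r in a..b, (if r ≤ c then f r else g r) ∂μ = (∫ r in a..c, f r ∂μ) + ∫ r in c..b, g r ∂μ := by
  have hleft : EqOn f (fun r => if r ≤ c then f r else g r) (uIoo a c) := by
    rw [uIoo_of_le hac]
    intro r hr
    simp [hr.2.le]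
  have hright : EqOn g (fun r => if r ≤ c then f r else g r) (uIoo c b) := by
    rw [uIoo_of_le hcb]
    intro r hr
    simp [hr.1]
  rw [← intervalIntegral.integral_add_adjacent_intervals (hf.congr_uIoo hleft)
    (hg.congr_uIoo hright), intervalIntegral.integral_congr_uIoo hleft.symm,
    intervalIntegral.integral_congr_uIoo hright.symm]

theorem integral_demeaned_mul_demeaned {f g : ℝ → ℝ} {a b : ℝ} (hab : a ≠ b)
    (hf : ContinuousOn f (uIcc a b)) (hg : ContinuousOn g (uIcc a b)) :
    ∫ r in a..b, (1 / (b - a) * (f r - 1 / (b - a) * ∫ s in a..b, f s))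
        * (1 / (b - a) * (g r - 1 / (b - a) * ∫ s in a..b, g s))
      = 1 / (b - a) ^ 2 * (∫ r in a..b, f r * g r)
        - 1 / (b - a) ^ 3 * (∫ r in a..b, f r) * ∫ r in a..b, g r := by
  set F := ∫ s in a..b, f s
  set G := ∫ s in a..b, g s
  have hba : b - a ≠ 0 := sub_ne_zero.2 hab.symm
  have hexpand : (fun r => (1 / (b - a) * (f r - 1 / (b - a) * F))
        * (1 / (b - a) * (g r - 1 / (b - a) * G)))
      = fun r => 1 / (b - a) ^ 2 * (f r * g r) - G / (b - a) ^ 3 * f r - F / (b - a) ^ 3 * g r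
        + F * G / (b - a) ^ 4 := by
    funext r
    field_simp
    ring
  rw [hexpand, intervalIntegral.integral_add _ intervalIntegrable_const,
    intervalIntegral.integral_sub, intervalIntegral.integral_sub,
    intervalIntegral.integral_const_mul, intervalIntegral.integral_const_mul,
    intervalIntegral.integral_const_mul,
    intervalIntegral.integral_const, smul_eq_mul]
  · field_simp
    ring
  all_goals exact ContinuousOn.intervalIntegrable (by fun_prop)

/-- convergence of the quadratic form (1/T²) 𝛗₁ᵀ C_T 𝛗₂ to the
limiting expression, which equals ∫₀¹ φ̃₁(r;λ) φ̃₂(r;λ) dr. -/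
theorem CT_quadratic_form_limit (lam : ℝ) (hlam0 : 0 < lam) (hlam1 : lam < 1)
    (φ₁ φ₂ : ℝ → ℝ)
    (hc1 : ContinuousOn φ₁ (Set.Icc 0 1)) (hc2 : ContinuousOn φ₂ (Set.Icc 0 1)) :
    Tendsto
      (fun T : ℕ =>
        (((T : ℝ) ^ 2)⁻¹) *
          ∑ i : Fin T, ∑ j : Fin T,
            φ₁ (((i : ℕ) + 1 : ℝ) / T) * CTmatrix T lam i j *
              φ₂ (((j : ℕ) + 1 : ℝ) / T))
      atTop
      (nhds
        ((1 / lam ^ 2) * (∫ r in (0:ℝ)..lam, φ₁ r * φ₂ r)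
          - (1 / lam ^ 3) * (∫ r in (0:ℝ)..lam, φ₁ r) * (∫ r in (0:ℝ)..lam, φ₂ r)
          + (1 / (1 - lam) ^ 2) * (∫ r in lam..(1:ℝ), φ₁ r * φ₂ r)
          - (1 / (1 - lam) ^ 3) * (∫ r in lam..(1:ℝ), φ₁ r) *
              (∫ r in lam..(1:ℝ), φ₂ r))) ∧
    ((1 / lam ^ 2) * (∫ r in (0:ℝ)..lam, φ₁ r * φ₂ r)
        - (1 / lam ^ 3) * (∫ r in (0:ℝ)..lam, φ₁ r) * (∫ r in (0:ℝ)..lam, φ₂ r)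
        + (1 / (1 - lam) ^ 2) * (∫ r in lam..(1:ℝ), φ₁ r * φ₂ r)
        - (1 / (1 - lam) ^ 3) * (∫ r in lam..(1:ℝ), φ₁ r) *
            (∫ r in lam..(1:ℝ), φ₂ r)) =
      ∫ r in (0:ℝ)..1,
        (if r ≤ lam then
            (1 / lam) * (φ₁ r - (1 / lam) * ∫ s in (0:ℝ)..lam, φ₁ s)
          else
            -((1 / (1 - lam)) * (φ₁ r - (1 / (1 - lam)) * ∫ s in lam..(1:ℝ), φ₁ s))) *
        (if r ≤ lam then
            (1 / lam) * (φ₂ r - (1 / lam) * ∫ s in (0:ℝ)..lam, φ₂ s)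
          else
            -((1 / (1 - lam)) * (φ₂ r - (1 / (1 - lam)) * ∫ s in lam..(1:ℝ), φ₂ s))) := by
  have hlow : uIcc 0 lam ⊆ Icc 0 1 := uIcc_subset_Icc ⟨le_rfl, zero_le_one⟩ ⟨hlam0.le, hlam1.le⟩
  have hhigh : uIcc lam 1 ⊆ Icc 0 1 := uIcc_subset_Icc ⟨hlam0.le, hlam1.le⟩ ⟨zero_le_one, le_rfl⟩
  constructor
  · have hIic {f : ℝ → ℝ} (hf : ContinuousOn f (Icc 0 1)) :=
      tendsto_gridRiemannSum_Iic hlam0.le hlam1.le (hf.mono (Icc_subset_Icc_right hlam1.le))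
    have hIoi {f : ℝ → ℝ} (hf : ContinuousOn f (Icc 0 1)) :=
      tendsto_gridRiemannSum_Ioi hlam0.le hlam1.le hf
    simp only [CTmatrix_quadForm_eq_gridRiemannSum]
    exact ((((hIic (hc1.mul hc2)).const_mul _).sub (((hIic hc1).const_mul _).mul (hIic hc2))).add
      ((hIoi (hc1.mul hc2)).const_mul _)).sub (((hIoi hc1).const_mul _).mul (hIoi hc2))
  · have hc1low := hc1.mono hlow
    have hc2low := hc2.mono hlow
    have hc1high := hc1.mono hhigh
    have hc2high := hc2.mono hhigh
    have hlower := integral_demeaned_mul_demeaned hlam0.ne hc1low hc2low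
    have hupper := integral_demeaned_mul_demeaned hlam1.ne hc1high hc2high
    rw [sub_zero] at hlower
    simp only [ite_mul_ite, neg_mul_neg]
    rw [intervalIntegral.integral_ite_le hlam0.le hlam1.le, hlower, hupper]
    · ring
    all_goals exact ContinuousOn.intervalIntegrable (by fun_prop)
end
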